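/- Every matrix ρ in the kernel of the Lindblad generator ℒ (i.e., every stationary state of the evolution) has ρ(1,1) = 0, ρ(0,1) = ρ(1,0) = ρ(1,2) = ρ(2,1) = 0; that is, the stationary states are exactly the matrices supported on the span of |1⟩ and |3⟩. -/

import Mathlib

open Matrix

noncomputable def E1 : Matrix (Fin 3) (Fin 3) ℂ := Matrix.single 0 1 1
noncomputable def E2 : Matrix (Fin 3) (Fin 3) ℂ := Matrix.single 2 1 1

/-- The Lindblad generator of laser cooling. -/
noncomputable def lind (γ₁ γ₂ : ℝ) (ρ : Matrix (Fin 3) (Fin 3) ℂ) :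
    Matrix (Fin 3) (Fin 3) ℂ :=
  (γ₁ : ℂ) • (E1 * ρ * E1ᴴ - (1/2 : ℂ) • (E1ᴴ * E1 * ρ + ρ * (E1ᴴ * E1)))
    + (γ₂ : ℂ) • (E2 * ρ * E2ᴴ - (1/2 : ℂ) • (E2ᴴ * E2 * ρ + ρ * (E2ᴴ * E2)))

/-!
Both jump operators leave the excited level |2⟩ (index `1`), so ℒ acts only through that level:
the (2,2) entry of ℒ(ρ) is -(γ₁ + γ₂) ρ₂₂, the other entries of row and column 2 are
-(γ₁ + γ₂)/2 times those of ρ, and the remaining entries are multiples of ρ₂₂.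
-/

namespace Matrix

variable {n : Type*} [Fintype n]

noncomputable def dissipator (L ρ : Matrix n n ℂ) : Matrix n n ℂ :=
  L * ρ * Lᴴ - (1 / 2 : ℂ) • (Lᴴ * L * ρ + ρ * (Lᴴ * L))

theorem dissipator_single_one [DecidableEq n] (i j : n) (ρ : Matrix n n ℂ) :
    dissipator (single i j 1) ρ =
      single i i (ρ j j) - (1 / 2 : ℂ) • (single j j 1 * ρ + ρ * single j j 1) := by
  simp [dissipator, conjTranspose_single]

end Matrix

theorem lind_eq_dissipator (γ₁ γ₂ : ℝ) (ρ : Matrix (Fin 3) (Fin 3) ℂ) :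
    lind γ₁ γ₂ ρ = (γ₁ : ℂ) • dissipator E1 ρ + (γ₂ : ℂ) • dissipator E2 ρ :=
  rfl

theorem lind_eq (γ₁ γ₂ : ℝ) (ρ : Matrix (Fin 3) (Fin 3) ℂ) :
    lind γ₁ γ₂ ρ = single 0 0 (γ₁ * ρ 1 1) + single 2 2 (γ₂ * ρ 1 1)
      - ((γ₁ + γ₂) / 2 : ℂ) • (single 1 1 1 * ρ + ρ * single 1 1 1) := by
  rw [lind_eq_dissipator, E1, E2, dissipator_single_one, dissipator_single_one, smul_sub,
    smul_sub, smul_single, smul_single, smul_eq_mul, smul_eq_mul, smul_smul, smul_smul]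
  module

theorem lind_apply_one_one (γ₁ γ₂ : ℝ) (ρ : Matrix (Fin 3) (Fin 3) ℂ) :
    lind γ₁ γ₂ ρ 1 1 = -(γ₁ + γ₂) * ρ 1 1 := by
  simp [lind_eq]
  ring

theorem lind_apply_of_ne (γ₁ γ₂ : ℝ) (ρ : Matrix (Fin 3) (Fin 3) ℂ) {a b : Fin 3} (hab : a ≠ b)
    (h : a = 1 ∨ b = 1) : lind γ₁ γ₂ ρ a b = -((γ₁ + γ₂) / 2) * ρ a b := by
  fin_cases a <;> fin_cases b <;> simp_all [lind_eq]

theorem stmt14 (γ₁ γ₂ : ℝ) (h₁ : 0 < γ₁) (h₂ : 0 < γ₂) (ρ : Matrix (Fin 3) (Fin 3) ℂ) :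
    lind γ₁ γ₂ ρ = 0 ↔
      ρ 1 1 = 0 ∧ ρ 0 1 = 0 ∧ ρ 1 0 = 0 ∧ ρ 1 2 = 0 ∧ ρ 2 1 = 0 := by
  have hγ : (γ₁ : ℂ) + γ₂ ≠ 0 := by exact_mod_cast (by positivity : γ₁ + γ₂ ≠ 0)
  constructor
  · intro h
    have h11 : ρ 1 1 = 0 := by
      have h11 := lind_apply_one_one γ₁ γ₂ ρ
      rw [h, Matrix.zero_apply, eq_comm, mul_eq_zero] at h11
      exact h11.resolve_left (neg_ne_zero.mpr hγ)
    have entry {a b : Fin 3} (hab : a ≠ b) (h1 : a = 1 ∨ b = 1) : ρ a b = 0 := by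
      have hab' := lind_apply_of_ne γ₁ γ₂ ρ hab h1
      rw [h, Matrix.zero_apply, eq_comm, mul_eq_zero] at hab'
      exact hab'.resolve_left (by simpa using hγ)
    exact ⟨h11, entry (by decide) (.inr rfl), entry (by decide) (.inl rfl),
      entry (by decide) (.inl rfl), entry (by decide) (.inr rfl)⟩
  · rintro ⟨h11, h01, h10, h12, h21⟩
    have hrow : single 1 1 1 * ρ = 0 := by
      ext a b
      fin_cases a <;> fin_cases b <;> simp [h11, h10, h12]
    have hcol : ρ * single 1 1 1 = 0 := by
      ext a b
      fin_cases a <;> fin_cases b <;> simp [h11, h01, h21]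
    simp [lind_eq, h11, hrow, hcol]
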